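/- Consider the events A_{x,2h}^{(k)} := {𝒦(T_U(x−1,k+1)) = {x, x+1, x+2}, L(x, T_U(x−1,k+1)) = 2h} and A_{x,2h} := {𝒦(T_D(x−1,h)) = {x,x+1,x+2}, L(x, T_D(x−1,h)) = 2h}, for x ≥ 2. Then ⋃_{k} A_{x,2h}^{(k)} ⊆ A_{x,2h}; in particular, on A_{x,2h}^{(k)}, the time T_D(x−1, h) is the unique time m < T_U(x−1,k+1) with S_m = x−1, S_{m−1} = x, 𝒦(m) = {x,x+1,x+2}, and L(x,m) = 2h. -/

import Mathlib

/-- Number of upcrossings of site `x` by time `n`. -/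
def xiU (S : ℕ → ℤ) (x : ℤ) (n : ℕ) : ℕ :=
  ((Finset.Icc 1 n).filter (fun k => S k = x ∧ S (k - 1) = x - 1)).card

/-- Number of downcrossings of site `x` by time `n`. -/
def xiD (S : ℕ → ℤ) (x : ℤ) (n : ℕ) : ℕ :=
  ((Finset.Icc 1 n).filter (fun k => S k = x ∧ S (k - 1) = x + 1)).card

/-- Edge local time. -/
def edgeLT (S : ℕ → ℤ) (x : ℤ) (n : ℕ) : ℕ :=
  ((Finset.Icc 1 n).filter (fun j => S j + S (j - 1) + 1 = 2 * x)).card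

/-- Favorite edge set at time `n`. -/
def favEdges (S : ℕ → ℤ) (n : ℕ) : Set ℤ :=
  {y : ℤ | ∀ z : ℤ, edgeLT S z n ≤ edgeLT S y n}

private lemma cnt_succ (P : ℕ → Prop) [DecidablePred P] (n : ℕ) :
    ((Finset.Icc 1 (n+1)).filter P).card
      = ((Finset.Icc 1 n).filter P).card + (if P (n+1) then 1 else 0) := by
  have hins : Finset.Icc 1 (n+1) = insert (n+1) (Finset.Icc 1 n) := by
    ext m; simp only [Finset.mem_Icc, Finset.mem_insert]; omega
  rw [hins, Finset.filter_insert]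
  split_ifs with hP
  · rw [Finset.card_insert_of_notMem (by
      intro hmem
      simp only [Finset.mem_filter, Finset.mem_Icc] at hmem
      omega)]
  · simp

private lemma cnt_mono (P : ℕ → Prop) [DecidablePred P] {m n : ℕ} (h : m ≤ n) :
    ((Finset.Icc 1 m).filter P).card ≤ ((Finset.Icc 1 n).filter P).card :=
  Finset.card_le_card (Finset.filter_subset_filter _ (Finset.Icc_subset_Icc_right h))

private lemma cnt_pred (P : ℕ → Prop) [DecidablePred P] {n : ℕ} (hn : 1 ≤ n) :
    ((Finset.Icc 1 n).filter P).card
      = ((Finset.Icc 1 (n - 1)).filter P).card + (if P n then 1 else 0) := by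
  obtain ⟨m, rfl⟩ : ∃ m, n = m + 1 := ⟨n - 1, by omega⟩
  simpa using cnt_succ P m

private lemma hitting (P : ℕ → Prop) [DecidablePred P] (c : ℕ) (hc : 1 ≤ c)
    (T : ℕ) (hT : T = sInf {n : ℕ | 1 ≤ n ∧ ((Finset.Icc 1 n).filter P).card = c})
    (hex : ∃ n, 1 ≤ n ∧ ((Finset.Icc 1 n).filter P).card = c) :
    1 ≤ T ∧ ((Finset.Icc 1 T).filter P).card = c ∧
      ((Finset.Icc 1 (T-1)).filter P).card = c - 1 ∧ P T := by
  have hmem : T ∈ {n : ℕ | 1 ≤ n ∧ ((Finset.Icc 1 n).filter P).card = c} := by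
    rw [hT]; exact Nat.sInf_mem hex
  obtain ⟨hT1, hTc⟩ := hmem
  have hpred := cnt_pred P hT1
  have hlt : ((Finset.Icc 1 (T-1)).filter P).card < c := by
    rcases Nat.eq_zero_or_pos (T - 1) with h0 | h0
    · rw [h0]; simp; omega
    · have hne : T - 1 ∉ {n : ℕ | 1 ≤ n ∧ ((Finset.Icc 1 n).filter P).card = c} := by
        rw [hT] at *
        exact Nat.notMem_of_lt_sInf (by omega)
      have hle := cnt_mono P (show T - 1 ≤ T by omega)
      simp only [Set.mem_setOf_eq, not_and] at hne
      have := hne h0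
      omega
  by_cases hPT : P T
  · refine ⟨hT1, hTc, ?_, hPT⟩
    rw [if_pos hPT] at hpred; omega
  · exfalso; rw [if_neg hPT] at hpred; omega

private lemma hittingU (S : ℕ → ℤ) (x : ℤ) (c : ℕ) (hc : 1 ≤ c) (T : ℕ)
    (hT : T = sInf {n : ℕ | 1 ≤ n ∧ xiU S x n = c})
    (hex : ∃ n, 1 ≤ n ∧ xiU S x n = c) :
    1 ≤ T ∧ xiU S x T = c ∧ xiU S x (T-1) = c - 1 ∧ (S T = x ∧ S (T-1) = x - 1) := by
  unfold xiU at hT hex ⊢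
  exact hitting _ c hc T hT hex

private lemma hittingD (S : ℕ → ℤ) (x : ℤ) (c : ℕ) (hc : 1 ≤ c) (T : ℕ)
    (hT : T = sInf {n : ℕ | 1 ≤ n ∧ xiD S x n = c})
    (hex : ∃ n, 1 ≤ n ∧ xiD S x n = c) :
    1 ≤ T ∧ xiD S x T = c ∧ xiD S x (T-1) = c - 1 ∧ (S T = x ∧ S (T-1) = x + 1) := by
  unfold xiD at hT hex ⊢
  exact hitting _ c hc T hT hex

private lemma balance (S : ℕ → ℤ) (hS0 : S 0 = 0)
    (hstep : ∀ k : ℕ, |S (k + 1) - S k| = 1) (x : ℤ) (hx : 0 < x) :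
    ∀ n, xiU S x n = xiD S (x - 1) n + (if x ≤ S n then 1 else 0) := by
  intro n
  induction n with
  | zero =>
      have hneg : ¬ x ≤ S 0 := by omega
      simp [xiU, xiD, hneg]
  | succ n ih =>
      unfold xiU xiD at ih ⊢
      rw [cnt_succ, cnt_succ]
      simp only [Nat.add_sub_cancel]
      have hs := (abs_eq (by norm_num : (0:ℤ) ≤ 1)).mp (hstep n)
      by_cases h2 : x ≤ S n
      · rw [if_pos h2] at ih
        rcases hs with hs | hs <;> split_ifs <;> omega
      · rw [if_neg h2] at ih
        rcases hs with hs | hs <;> split_ifs <;> omega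

private lemma edge_decomp (S : ℕ → ℤ) (hstep : ∀ k : ℕ, |S (k + 1) - S k| = 1) (x : ℤ) :
    ∀ n, edgeLT S x n = xiU S x n + xiD S (x - 1) n := by
  intro n
  induction n with
  | zero => simp [edgeLT, xiU, xiD]
  | succ n ih =>
      unfold edgeLT xiU xiD at ih ⊢
      rw [cnt_succ, cnt_succ, cnt_succ]
      simp only [Nat.add_sub_cancel]
      have hs := (abs_eq (by norm_num : (0:ℤ) ≤ 1)).mp (hstep n)
      rcases hs with hs | hs <;> split_ifs <;> omega

private lemma edgeLT_mono (S : ℕ → ℤ) (x : ℤ) {m n : ℕ} (h : m ≤ n) :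
    edgeLT S x m ≤ edgeLT S x n := by
  unfold edgeLT; exact cnt_mono _ h

private lemma edgeLT_pred (S : ℕ → ℤ) (x : ℤ) {n : ℕ} (hn : 1 ≤ n) :
    edgeLT S x n = edgeLT S x (n-1) + (if S n + S (n-1) + 1 = 2*x then 1 else 0) := by
  unfold edgeLT; exact cnt_pred _ hn

/-- If at time `T_U(x-1,k+1)` the favorite edge set is `{x, x+1, x+2}` with common
edge local time `2h` (the event `A_{x,2h}^{(k)}`), then at time `T_D(x-1,h)` the
favorite edge set was already `{x,x+1,x+2}` with `L(x,·) = 2h` (the event `A_{x,2h}`);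
moreover `T_D(x-1,h)` is the unique time `m < T_U(x-1,k+1)` with `S m = x-1`,
`S (m-1) = x`, favorite edges `{x,x+1,x+2}` and `L(x,m) = 2h`. -/
theorem stmt18 (S : ℕ → ℤ) (hS0 : S 0 = 0)
    (hstep : ∀ k : ℕ, |S (k + 1) - S k| = 1)
    (x : ℤ) (hx : 2 ≤ x) (k h : ℕ) (hh : 1 ≤ h)
    (TU : ℕ) (hTU : TU = sInf {n : ℕ | 1 ≤ n ∧ xiU S (x - 1) n = k + 1})
    (hTUex : ∃ n : ℕ, 1 ≤ n ∧ xiU S (x - 1) n = k + 1)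
    (hK : favEdges S TU = {x, x + 1, x + 2})
    (hL : edgeLT S x TU = 2 * h)
    (TD : ℕ) (hTD : TD = sInf {n : ℕ | 1 ≤ n ∧ xiD S (x - 1) n = h}) :
    (favEdges S TD = {x, x + 1, x + 2} ∧ edgeLT S x TD = 2 * h) ∧
    ∀ m : ℕ,
      (1 ≤ m ∧ m < TU ∧ S m = x - 1 ∧ S (m - 1) = x ∧
        favEdges S m = {x, x + 1, x + 2} ∧ edgeLT S x m = 2 * h) ↔ m = TD := by
  obtain ⟨hTU1, hUTUc, -, hSTU, hSTU'⟩ :=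
    hittingU S (x - 1) (k + 1) (by omega) TU hTU hTUex
  have hbal := balance S hS0 hstep x (by omega)
  have hdec := edge_decomp S hstep x
  -- downcrossing count at TU equals h
  have hUeqD : xiU S x TU = xiD S (x - 1) TU := by
    have hb := hbal TU
    rw [if_neg (by omega)] at hb
    exact hb
  have hDTU : xiD S (x - 1) TU = h := by
    have hd := hdec TU
    omega
  -- TD properties
  obtain ⟨hTD1, hDTD, hDTDp, hSTD, hSTD'⟩ :=
    hittingD S (x - 1) h hh TD hTD ⟨TU, hTU1, hDTU⟩
  have hTDle : TD ≤ TU := by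
    rw [hTD]; exact Nat.sInf_le ⟨hTU1, hDTU⟩
  have hTDlt : TD < TU := by
    rcases eq_or_lt_of_le hTDle with heq | hlt
    · exfalso; rw [heq] at hSTD'; omega
    · exact hlt
  have hLTD : edgeLT S x TD = 2 * h := by
    have h1 := hdec TD
    have h2 := hbal TD
    rw [if_neg (by omega)] at h2
    omega
  -- edge local time of edge x is constant on [TD, TU]
  have hconst : ∀ n, TD ≤ n → n ≤ TU → edgeLT S x n = 2 * h := fun n h1 h2 =>
    le_antisymm (hL ▸ edgeLT_mono S x h2) (hLTD ▸ edgeLT_mono S x h1)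
  have hnocross : ∀ j, TD < j → j ≤ TU → ¬ (S j + S (j - 1) + 1 = 2 * x) := by
    intro j hj1 hj2 hcross
    have hp := edgeLT_pred S x (show 1 ≤ j by omega)
    rw [if_pos hcross] at hp
    have e1 := hconst j (by omega) hj2
    have e2 := hconst (j - 1) (by omega) (by omega)
    omega
  -- the walk stays at or below x - 1 on [TD, TU]
  have hbelow : ∀ n, TD ≤ n → n ≤ TU → S n ≤ x - 1 := by
    intro n hn
    induction n, hn using Nat.le_induction with
    | base => intro _; omega
    | succ n hn ih =>
        intro hle
        have hbn := ih (by omega)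
        by_contra hgt
        push_neg at hgt
        have hs := (abs_eq (by norm_num : (0:ℤ) ≤ 1)).mp (hstep n)
        exact hnocross (n + 1) (by omega) hle
          (by simp only [Nat.add_sub_cancel]; omega)
  -- edges at height ≥ x are frozen between TD and TU
  have hfrozen : ∀ y : ℤ, x ≤ y → edgeLT S y TU = edgeLT S y TD := by
    intro y hy
    have key : ∀ n, TD ≤ n → n ≤ TU → edgeLT S y n = edgeLT S y TD := by
      intro n hn
      induction n, hn using Nat.le_induction with
      | base => intro _; rfl
      | succ n hn ih =>
          intro hle
          have h1 := hbelow n hn (by omega)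
          have h2 := hbelow (n + 1) (by omega) hle
          have hp := edgeLT_pred S y (show 1 ≤ n + 1 by omega)
          simp only [Nat.add_sub_cancel] at hp
          rw [if_neg (by omega)] at hp
          have := ih (by omega)
          omega
    exact key TU hTDle le_rfl
  -- maximal edge local time at TU is 2h
  have hxmem : ∀ z, edgeLT S z TU ≤ 2 * h := by
    have hx' : x ∈ favEdges S TU := by rw [hK]; exact Set.mem_insert _ _
    simp only [favEdges, Set.mem_setOf_eq] at hx'
    intro z
    calc edgeLT S z TU ≤ edgeLT S x TU := hx' z
      _ = 2 * h := hL
  have hL1 : edgeLT S (x + 1) TU = 2 * h := by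
    have hm : (x + 1) ∈ favEdges S TU := by
      rw [hK]; exact Set.mem_insert_iff.mpr (Or.inr (Set.mem_insert _ _))
    simp only [favEdges, Set.mem_setOf_eq] at hm
    have := hm x
    have := hxmem (x + 1)
    omega
  have hL2 : edgeLT S (x + 2) TU = 2 * h := by
    have hm : (x + 2) ∈ favEdges S TU := by
      rw [hK]
      exact Set.mem_insert_iff.mpr (Or.inr (Set.mem_insert_iff.mpr
        (Or.inr (Set.mem_singleton _))))
    simp only [favEdges, Set.mem_setOf_eq] at hm
    have := hm x
    have := hxmem (x + 2)
    omega
  have h2hTD : ∀ z, edgeLT S z TD ≤ 2 * h := fun z =>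
    le_trans (edgeLT_mono S z hTDle) (hxmem z)
  have hLTD1 : edgeLT S (x + 1) TD = 2 * h := by
    rw [← hfrozen (x + 1) (by omega)]; exact hL1
  have hLTD2 : edgeLT S (x + 2) TD = 2 * h := by
    rw [← hfrozen (x + 2) (by omega)]; exact hL2
  -- favorite edges at TD
  have hfavTD : favEdges S TD = {x, x + 1, x + 2} := by
    ext z
    simp only [favEdges, Set.mem_setOf_eq]
    constructor
    · intro hz
      have h1 : 2 * h ≤ edgeLT S z TD := hLTD ▸ hz x
      have h2 : edgeLT S z TD = 2 * h := le_antisymm (h2hTD z) h1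
      have h3 : edgeLT S z TU = 2 * h :=
        le_antisymm (hxmem z) (h2 ▸ edgeLT_mono S z hTDle)
      have hzf : z ∈ favEdges S TU := by
        simp only [favEdges, Set.mem_setOf_eq]
        intro w
        rw [h3]; exact hxmem w
      rw [hK] at hzf
      exact hzf
    · intro hz w
      have hz2 : edgeLT S z TD = 2 * h := by
        simp only [Set.mem_insert_iff, Set.mem_singleton_iff] at hz
        rcases hz with rfl | rfl | rfl
        · exact hLTD
        · exact hLTD1
        · exact hLTD2
      rw [hz2]; exact h2hTD w
  refine ⟨⟨hfavTD, hLTD⟩, ?_⟩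
  intro m
  constructor
  · rintro ⟨hm1, hmTU, hSm, hSm', -, hLm⟩
    have hb := hbal m
    rw [if_neg (by omega)] at hb
    have hd := hdec m
    have hDm : xiD S (x - 1) m = h := by omega
    have hTDlem : TD ≤ m := by rw [hTD]; exact Nat.sInf_le ⟨hm1, hDm⟩
    rcases eq_or_lt_of_le hTDlem with heq | hlt
    · exact heq.symm
    · exfalso
      have hp := edgeLT_pred S x hm1
      rw [if_pos (by omega)] at hp
      have hmono := edgeLT_mono S x (show TD ≤ m - 1 by omega)
      omega
  · rintro rfl
    exact ⟨hTD1, hTDlt, hSTD, by omega, hfavTD, hLTD⟩
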